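/- For every g ≥ 3, the symplectic group Sp_{2g}(ℤ) is perfect; equivalently, its abelianisation is the trivial group. -/

import Mathlib

open Matrix

/-- Index type for `2g × 2g` matrices: the first `g` indices correspond to the
basis vectors `e₁, …, e_g` and the last `g` to `f₁, …, f_g`. -/
abbrev HypIdx (g : ℕ) := Fin g ⊕ Fin g

/-- Gram matrix of the orthogonal sum of `g` hyperbolic planes. -/
def Qmat (g : ℕ) : Matrix (HypIdx g) (HypIdx g) ℤ := Matrix.fromBlocks 0 1 1 0

/-- The standard symplectic form matrix. -/
def Jmat (g : ℕ) : Matrix (HypIdx g) (HypIdx g) ℤ := Matrix.fromBlocks 0 1 (-1) 0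

/-- The subgroup of `GL_{2g}(ℤ)` of matrices `A` with `Aᵀ * Q * A = Q`. -/
def formGroup (g : ℕ) (Q : Matrix (HypIdx g) (HypIdx g) ℤ) :
    Subgroup (GL (HypIdx g) ℤ) where
  carrier := {A | A.valᵀ * Q * A.val = Q}
  one_mem' := by simp
  mul_mem' := by
    intro A B hA hB
    have hA' : A.valᵀ * Q * A.val = Q := hA
    have hB' : B.valᵀ * Q * B.val = Q := hB
    show (A * B).valᵀ * Q * (A * B).val = Q
    rw [Units.val_mul, transpose_mul]
    calc B.valᵀ * A.valᵀ * Q * (A.val * B.val)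
        = B.valᵀ * (A.valᵀ * Q * A.val) * B.val := by noncomm_ring
      _ = B.valᵀ * Q * B.val := by rw [hA']
      _ = Q := hB'
  inv_mem' := by
    intro A hA
    have hA' : A.valᵀ * Q * A.val = Q := hA
    show (A⁻¹).valᵀ * Q * (A⁻¹).val = Q
    have h1 : A.val * (A⁻¹).val = 1 := by
      rw [← Units.val_mul, mul_inv_cancel, Units.val_one]
    calc (A⁻¹).valᵀ * Q * (A⁻¹).val
        = (A⁻¹).valᵀ * (A.valᵀ * Q * A.val) * (A⁻¹).val := by rw [hA']
      _ = (A.val * (A⁻¹).val)ᵀ * Q * (A.val * (A⁻¹).val) := by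
          rw [transpose_mul]; noncomm_ring
      _ = Q := by rw [h1]; simp

/-- `O_{g,g}(ℤ)`. -/
def Ogg (g : ℕ) : Subgroup (GL (HypIdx g) ℤ) := formGroup g (Qmat g)

/-- `Sp_{2g}(ℤ)`. -/
def Sp (g : ℕ) : Subgroup (GL (HypIdx g) ℤ) := formGroup g (Jmat g)

/-- The standard quadratic refinement `q(x, y) = Σᵢ xᵢ yᵢ mod 2`. -/
def qform (g : ℕ) (v : HypIdx g → ℤ) : ZMod 2 :=
  ∑ i : Fin g, ((v (Sum.inl i) * v (Sum.inr i) : ℤ) : ZMod 2)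

/-- The subgroup of `GL_{2g}(ℤ)` preserving the quadratic refinement `q`. -/
def qPreserving (g : ℕ) : Subgroup (GL (HypIdx g) ℤ) where
  carrier := {A | ∀ v : HypIdx g → ℤ, qform g (A.val.mulVec v) = qform g v}
  one_mem' := by intro v; simp
  mul_mem' := by
    intro A B hA hB v
    show qform g ((A * B).val.mulVec v) = qform g v
    rw [Units.val_mul, ← Matrix.mulVec_mulVec, hA, hB]
  inv_mem' := by
    intro A hA v
    have h1 : A.val.mulVec ((A⁻¹).val.mulVec v) = v := by
      rw [Matrix.mulVec_mulVec, ← Units.val_mul, mul_inv_cancel, Units.val_one,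
        Matrix.one_mulVec]
    calc qform g ((A⁻¹).val.mulVec v)
        = qform g (A.val.mulVec ((A⁻¹).val.mulVec v)) := (hA _).symm
      _ = qform g v := by rw [h1]

/-- `Sp^q_{2g}(ℤ)`: symplectic matrices preserving the quadratic refinement. -/
def Spq (g : ℕ) : Subgroup (GL (HypIdx g) ℤ) := Sp g ⊓ qPreserving g

/-!
`Sp_{2g}(ℤ)` is generated by the translations `T_B = [[1, B], [0, 1]]` and
`T'_C = [[1, 0], [C, 1]]`, `B` and `C` symmetric. Indeed, if `A` fixes the hyperbolic pairs
`(e_i, f_i)` outside a set `t ∋ k`, translations fixing those pairs bring `A e_k` back to `e_k`: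
the Euclidean algorithm in each pair `(e_j, f_j)` reduces it to a vector `(x, 0)`, and since `x`
is unimodular there is a symmetric `C` with `C x = e_k`. Then `A f_k` has `f_k`-coordinate `1`
and is moved to `f_k` by translations that also fix `e_k`, so induction on `t` applies.

Every translation is a commutator when `g ≥ 3`: conjugating `T_B` by `diag(U, U⁻ᵀ)` gives
`T_{U B Uᵀ}`, so `T_{U B Uᵀ - B}` is a commutator, and for elementary `U` these differences
generate all symmetric matrices once a third index is available. Finally `T'_C = J T_{-C} J⁻¹`.
-/

instance {n R : Type*} [Fintype n] [DecidableEq n] [Semiring R] : MulAction (GL n R) (n → R) where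
  smul A v := (A : Matrix n n R) *ᵥ v
  one_smul := one_mulVec
  mul_smul A B v := (mulVec_mulVec v (A : Matrix n n R) B).symm

namespace MulAction

theorem mem_orbit_trans {G α : Type*} [Group G] [MulAction G α] {a b c : α}
    (hab : b ∈ orbit G a) (hbc : c ∈ orbit G b) : c ∈ orbit G a :=
  orbit_eq_iff.mpr hab ▸ hbc

theorem mem_orbit_subgroup_iff {G α : Type*} [Group G] [MulAction G α] {K : Subgroup G}
    {v w : α} : w ∈ orbit K v ↔ ∃ E ∈ K, E • v = w := by
  simp [mem_orbit_iff, Subgroup.smul_def]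

end MulAction

theorem Int.exists_mk_zero_mem_of_shear_closed {S : Set (ℤ × ℤ)}
    (h₁ : ∀ a b c : ℤ, (a, b) ∈ S → (a + c * b, b) ∈ S)
    (h₂ : ∀ a b c : ℤ, (a, b) ∈ S → (a, b + c * a) ∈ S) {a b : ℤ} (hab : (a, b) ∈ S) :
    ∃ d, (d, 0) ∈ S := by
  induction hn : b.natAbs using Nat.strong_induction_on generalizing a b with
  | _ n ih =>
    rcases eq_or_ne b 0 with rfl | hb
    · exact ⟨a, hab⟩
    have hmod : (a % b, b) ∈ S := by
      simpa [Int.emod_def, sub_eq_add_neg, mul_comm] using h₁ a b (-(a / b)) hab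
    -- three shears compose to the rotation `(r, b) ↦ (b, -r)`
    have hrot : (b, -(a % b)) ∈ S := by
      have := h₁ _ _ 1 (h₂ _ _ (-1) (h₁ _ _ 1 hmod))
      ring_nf at this ⊢
      exact this
    refine ih _ ?_ hrot rfl
    have := Int.emod_lt a hb
    have := Int.emod_nonneg a hb
    omega

namespace Matrix

variable {n R : Type*}

theorem isSymm_single_self [DecidableEq n] [Zero R] (i : n) (c : R) : (single i i c).IsSymm :=
  transpose_single i i c

variable [Fintype n]

theorem IsSymm.mul_mul_transpose [CommSemiring R] {B : Matrix n n R} (hB : B.IsSymm)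
    (U : Matrix n n R) : (U * B * Uᵀ).IsSymm := by
  simp [IsSymm, transpose_mul, hB.eq, Matrix.mul_assoc]

theorem transpose_one_add_single_mul_one_sub_single [DecidableEq n] [Ring R] {i j : n}
    (hij : i ≠ j) : (1 + single i j (1 : R))ᵀ * (1 - single j i 1) = 1 := by
  simp [transpose_single, add_mul, mul_sub, hij]

variable [CommRing R]

def symmSending (z x r : n → R) : Matrix n n R :=
  vecMulVec r z + vecMulVec z r - (r ⬝ᵥ x) • vecMulVec z z

theorem isSymm_symmSending (z x r : n → R) : (symmSending z x r).IsSymm := by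
  simp [symmSending, IsSymm, transpose_smul, add_comm]

theorem symmSending_mulVec (z x r u : n → R) :
    symmSending z x r *ᵥ u = (z ⬝ᵥ u) • r + (r ⬝ᵥ u) • z - ((r ⬝ᵥ x) * (z ⬝ᵥ u)) • z := by
  simp [symmSending, add_mulVec, sub_mulVec, smul_mulVec, vecMulVec_mulVec, mul_smul]

theorem symmSending_mulVec_self {z x : n → R} (h : z ⬝ᵥ x = 1) (r : n → R) :
    symmSending z x r *ᵥ x = r := by
  rw [symmSending_mulVec, h, dotProduct_comm]
  simp

theorem symmSending_mulVec_single [DecidableEq n] {z r : n → R} {i : n} (hz : z i = 0)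
    (hr : r i = 0) (x : n → R) : symmSending z x r *ᵥ Pi.single i 1 = 0 := by
  rw [symmSending_mulVec]
  simp [hz, hr]

end Matrix

namespace Sp

open MulAction

variable {g : ℕ}

local notation "Mat" => Matrix (HypIdx g) (HypIdx g) ℤ

/-! ### Symplectic matrices acting on `ℤ^{2g}` -/

instance : CoeOut (Sp g) Mat := ⟨fun A => A.1.1⟩

theorem transpose_mul_mul (A : Sp g) : (A : Mat)ᵀ * Jmat g * (A : Mat) = Jmat g := A.2

theorem smul_def (A : Sp g) (v : HypIdx g → ℤ) : A • v = (A : Mat) *ᵥ v := rfl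

@[ext] theorem ext {A B : Sp g} (h : (A : Mat) = B) : A = B := Subtype.ext (Units.ext h)

theorem Jmat_mul_self : Jmat g * Jmat g = -1 := by
  rw [Jmat, fromBlocks_multiply, ← fromBlocks_one, fromBlocks_neg]
  simp

theorem Jmat_transpose : (Jmat g)ᵀ = -Jmat g := by
  simp [Jmat, fromBlocks_transpose, fromBlocks_neg]

def ofMatrix (M : Mat) (hM : Mᵀ * Jmat g * M = Jmat g) : Sp g :=
  have h : -(Jmat g * Mᵀ * Jmat g) * M = 1 := by
    rw [show -(Jmat g * Mᵀ * Jmat g) * M = -(Jmat g * (Mᵀ * Jmat g * M)) by noncomm_ring, hM,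
      Jmat_mul_self, neg_neg]
  ⟨⟨M, _, mul_eq_one_comm.mp h, h⟩, hM⟩

@[simp] theorem coe_ofMatrix (M : Mat) (hM) : ((ofMatrix M hM : Sp g) : Mat) = M := rfl

theorem ofMatrix_smul (M : Mat) (hM) (v : HypIdx g → ℤ) : ofMatrix M hM • v = M *ᵥ v := rfl

def symplecticForm (u v : HypIdx g → ℤ) : ℤ := u ⬝ᵥ Jmat g *ᵥ v

theorem symplecticForm_smul (A : Sp g) (u v : HypIdx g → ℤ) :
    symplecticForm (A • u) (A • v) = symplecticForm u v := by
  rw [symplecticForm, symplecticForm, smul_def, smul_def, ← vecMul_transpose, ← dotProduct_mulVec,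
    mulVec_mulVec, mulVec_mulVec, transpose_mul_mul]

theorem symplecticForm_sum_elim (x y x' y' : Fin g → ℤ) :
    symplecticForm (Sum.elim x y) (Sum.elim x' y') = x ⬝ᵥ y' - y ⬝ᵥ x' := by
  simp [symplecticForm, Jmat, fromBlocks_mulVec, sub_eq_add_neg, neg_mulVec]

def e (i : Fin g) : HypIdx g → ℤ := Sum.elim (Pi.single i 1) 0

def f (i : Fin g) : HypIdx g → ℤ := Sum.elim 0 (Pi.single i 1)

@[simp] theorem symplecticForm_e (i : Fin g) (x y : Fin g → ℤ) :
    symplecticForm (e i) (Sum.elim x y) = y i := by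
  rw [e, symplecticForm_sum_elim]
  simp

@[simp] theorem symplecticForm_f (i : Fin g) (x y : Fin g → ℤ) :
    symplecticForm (f i) (Sum.elim x y) = -x i := by
  rw [f, symplecticForm_sum_elim]
  simp

theorem fromBlocks_one_zero_symplectic {B : Matrix (Fin g) (Fin g) ℤ} (hB : B.IsSymm) :
    (fromBlocks 1 B 0 1)ᵀ * Jmat g * fromBlocks 1 B 0 1 = Jmat g := by
  simp [Jmat, fromBlocks_transpose, fromBlocks_multiply, hB.eq]

theorem fromBlocks_zero_one_symplectic {C : Matrix (Fin g) (Fin g) ℤ} (hC : C.IsSymm) :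
    (fromBlocks 1 0 C 1)ᵀ * Jmat g * fromBlocks 1 0 C 1 = Jmat g := by
  simp [Jmat, fromBlocks_transpose, fromBlocks_multiply, hC.eq]

theorem fromBlocks_diagonal_symplectic {U V : Matrix (Fin g) (Fin g) ℤ} (hUV : Uᵀ * V = 1) :
    (fromBlocks U 0 0 V)ᵀ * Jmat g * fromBlocks U 0 0 V = Jmat g := by
  have hVU : Vᵀ * U = 1 := by simpa using congrArg transpose hUV
  simp [Jmat, fromBlocks_transpose, fromBlocks_multiply, hUV, hVU]

theorem Jmat_symplectic : (Jmat g)ᵀ * Jmat g * Jmat g = Jmat g := by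
  rw [Jmat_transpose, neg_mul, Matrix.neg_mul, Matrix.mul_assoc, Jmat_mul_self, Matrix.mul_neg,
    Matrix.mul_one, neg_neg]

def upperTrans (B : Matrix (Fin g) (Fin g) ℤ) (hB : B.IsSymm) : Sp g :=
  ofMatrix _ (fromBlocks_one_zero_symplectic hB)

def lowerTrans (C : Matrix (Fin g) (Fin g) ℤ) (hC : C.IsSymm) : Sp g :=
  ofMatrix _ (fromBlocks_zero_one_symplectic hC)

def blockDiag (U V : Matrix (Fin g) (Fin g) ℤ) (hUV : Uᵀ * V = 1) : Sp g :=
  ofMatrix _ (fromBlocks_diagonal_symplectic hUV)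

def jmat : Sp g := ofMatrix _ Jmat_symplectic

theorem upperTrans_smul (B : Matrix (Fin g) (Fin g) ℤ) (hB) (x y : Fin g → ℤ) :
    upperTrans B hB • Sum.elim x y = Sum.elim (x + B *ᵥ y) y := by
  simp [upperTrans, ofMatrix_smul, fromBlocks_mulVec]

theorem lowerTrans_smul (C : Matrix (Fin g) (Fin g) ℤ) (hC) (x y : Fin g → ℤ) :
    lowerTrans C hC • Sum.elim x y = Sum.elim x (y + C *ᵥ x) := by
  simp [lowerTrans, ofMatrix_smul, fromBlocks_mulVec, add_comm]

theorem upperTrans_mem_stabilizer_e (B : Matrix (Fin g) (Fin g) ℤ) (hB) (k : Fin g) :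
    upperTrans B hB ∈ stabilizer (Sp g) (e k) := by
  rw [mem_stabilizer_iff, e, upperTrans_smul, mulVec_zero, add_zero]

theorem lowerTrans_mem_stabilizer_e {C : Matrix (Fin g) (Fin g) ℤ} (hC) {k : Fin g}
    (hCk : C *ᵥ Pi.single k 1 = 0) : lowerTrans C hC ∈ stabilizer (Sp g) (e k) := by
  rw [mem_stabilizer_iff, e, lowerTrans_smul, hCk, zero_add]

/-! ### Generation by translations -/

def translations (g : ℕ) : Subgroup (Sp g) :=
  Subgroup.closure {A | (∃ B hB, upperTrans B hB = A) ∨ ∃ C hC, lowerTrans C hC = A}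

def fixerOutside (t : Finset (Fin g)) : Subgroup (Sp g) :=
  fixingSubgroup (Sp g) {v | ∃ i ∉ t, v = e i ∨ v = f i}

theorem mem_fixerOutside {t : Finset (Fin g)} {A : Sp g} :
    A ∈ fixerOutside t ↔ ∀ i ∉ t, A • e i = e i ∧ A • f i = f i := by
  simp only [fixerOutside, mem_fixingSubgroup_iff, Set.mem_ofPred_eq]
  grind

theorem upperTrans_mem_inf_fixerOutside {t : Finset (Fin g)}
    {B : Matrix (Fin g) (Fin g) ℤ} (hB : B.IsSymm) (hBt : ∀ i ∉ t, B *ᵥ Pi.single i 1 = 0) :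
    upperTrans B hB ∈ translations g ⊓ fixerOutside t := by
  refine ⟨Subgroup.subset_closure (.inl ⟨B, hB, rfl⟩), mem_fixerOutside.mpr fun i hi => ?_⟩
  rw [e, f, upperTrans_smul, upperTrans_smul, hBt i hi]
  simp

theorem lowerTrans_mem_inf_fixerOutside {t : Finset (Fin g)}
    {C : Matrix (Fin g) (Fin g) ℤ} (hC : C.IsSymm) (hCt : ∀ i ∉ t, C *ᵥ Pi.single i 1 = 0) :
    lowerTrans C hC ∈ translations g ⊓ fixerOutside t := by
  refine ⟨Subgroup.subset_closure (.inr ⟨C, hC, rfl⟩), mem_fixerOutside.mpr fun i hi => ?_⟩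
  rw [e, f, lowerTrans_smul, lowerTrans_smul, hCt i hi]
  simp

-- The `e_i`- and `f_i`-coordinates are `-symplecticForm (f i)` and `symplecticForm (e i)`,
-- which `A` preserves.
theorem exists_smul_sum_elim_of_mem_fixerOutside {t : Finset (Fin g)} {A : Sp g}
    (hA : A ∈ fixerOutside t) {x y : Fin g → ℤ} (hx : ∀ i ∉ t, x i = 0) (hy : ∀ i ∉ t, y i = 0) :
    ∃ x' y', A • Sum.elim x y = Sum.elim x' y' ∧ (∀ i ∉ t, x' i = 0) ∧ ∀ i ∉ t, y' i = 0 := by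
  have hv := (Sum.elim_comp_inl_inr (A • Sum.elim x y)).symm
  refine ⟨_, _, hv, fun i hi => ?_, fun i hi => ?_⟩
  · have := symplecticForm_smul A (f i) (Sum.elim x y)
    rw [(mem_fixerOutside.mp hA i hi).2, hv, symplecticForm_f, symplecticForm_f, hx i hi] at this
    simpa using this
  · have := symplecticForm_smul A (e i) (Sum.elim x y)
    rwa [(mem_fixerOutside.mp hA i hi).1, hv, symplecticForm_e, symplecticForm_e, hy i hi] at this

theorem exists_update_mem_orbit {t : Finset (Fin g)} {j : Fin g} (hj : j ∈ t)
    (x y : Fin g → ℤ) : ∃ d, Sum.elim (Function.update x j d) (Function.update y j 0) ∈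
      orbit ↥(translations g ⊓ fixerOutside t) (Sum.elim x y) := by
  have hcol (c : ℤ) : ∀ i ∉ t, single j j c *ᵥ Pi.single i 1 = 0 := fun i hi => by
    ext a
    simp [ne_of_mem_of_not_mem hj hi]
  have hshear (u v : Fin g → ℤ) (a b c : ℤ) :
      Function.update u j a + single j j c *ᵥ Function.update v j b =
        Function.update u j (a + c * b) := by
    ext i
    rcases eq_or_ne i j with rfl | h <;> simp [single_mulVec, *]
  refine Int.exists_mk_zero_mem_of_shear_closed
    (S := {p | Sum.elim (Function.update x j p.1) (Function.update y j p.2) ∈ orbit _ _})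
    (fun a b c h => ?_) (fun a b c h => ?_) (a := x j) (b := y j) ?_
  · have := mem_orbit_of_mem_orbit
      ⟨_, upperTrans_mem_inf_fixerOutside (isSymm_single_self j c) (hcol c)⟩ h
    rwa [Subgroup.smul_def, upperTrans_smul, hshear] at this
  · have := mem_orbit_of_mem_orbit
      ⟨_, lowerTrans_mem_inf_fixerOutside (isSymm_single_self j c) (hcol c)⟩ h
    rwa [Subgroup.smul_def, lowerTrans_smul, hshear] at this
  · simp only [Set.mem_ofPred_eq, Function.update_eq_self]
    exact mem_orbit_self _

theorem exists_sum_elim_zero_mem_orbit {t s : Finset (Fin g)} (hs : s ⊆ t) {x y : Fin g → ℤ}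
    (hx : ∀ i ∉ t, x i = 0) (hy : ∀ i ∉ s, y i = 0) : ∃ x₀, (∀ i ∉ t, x₀ i = 0) ∧
      Sum.elim x₀ (0 : Fin g → ℤ) ∈ orbit ↥(translations g ⊓ fixerOutside t) (Sum.elim x y) := by
  induction s using Finset.induction_on generalizing x y with
  | empty =>
    obtain rfl : y = 0 := funext fun i => hy i (Finset.notMem_empty i)
    exact ⟨x, hx, mem_orbit_self _⟩
  | insert j s hj ih =>
    have hjt : j ∈ t := hs (Finset.mem_insert_self j s)
    obtain ⟨d, hd⟩ := exists_update_mem_orbit hjt x y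
    obtain ⟨x₀, hx₀, h⟩ := ih ((Finset.subset_insert j s).trans hs)
      (x := Function.update x j d) (y := Function.update y j 0)
      (fun i hi => by rw [Function.update_of_ne (ne_of_mem_of_not_mem hjt hi).symm, hx i hi])
      (fun i hi => by
        rcases eq_or_ne i j with rfl | hij
        · exact Function.update_self ..
        · rw [Function.update_of_ne hij, hy i (by simp [hi, hij])])
    exact ⟨x₀, hx₀, mem_orbit_trans hd h⟩

theorem e_mem_orbit_of_symplecticForm_eq_one {t : Finset (Fin g)} {k : Fin g} (hk : k ∈ t)
    {x y x' y' : Fin g → ℤ} (hx : ∀ i ∉ t, x i = 0) (hy : ∀ i ∉ t, y i = 0)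
    (hx' : ∀ i ∉ t, x' i = 0) (hy' : ∀ i ∉ t, y' i = 0)
    (hω : symplecticForm (Sum.elim x y) (Sum.elim x' y') = 1) :
    e k ∈ orbit ↥(translations g ⊓ fixerOutside t) (Sum.elim x y) := by
  obtain ⟨x₀, hx₀, hxy⟩ := exists_sum_elim_zero_mem_orbit subset_rfl hx hy
  obtain ⟨E, hE, hEv⟩ := mem_orbit_subgroup_iff.mp hxy
  obtain ⟨_, y₁, hEw, -, hy₁⟩ := exists_smul_sum_elim_of_mem_fixerOutside hE.2 hx' hy'
  have hy₁x₀ : y₁ ⬝ᵥ x₀ = 1 := by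
    have := symplecticForm_smul E (Sum.elim x y) (Sum.elim x' y')
    rw [hEv, hEw, hω, symplecticForm_sum_elim] at this
    simpa [dotProduct_comm] using this
  refine mem_orbit_trans hxy ?_
  set ek : Fin g → ℤ := Pi.single k 1
  have hk' : ∀ i ∉ t, ek i = 0 := fun i hi =>
    Pi.single_eq_of_ne (ne_of_mem_of_not_mem hk hi).symm 1
  have hekek : ek ⬝ᵥ ek = 1 := by simp [ek]
  -- `(x₀, 0) ↦ (x₀, e_k) ↦ (e_k, e_k) ↦ (e_k, 0)`; the first step uses `y₁ ⬝ᵥ x₀ = 1`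
  have hmem := mul_mem (mul_mem
    (lowerTrans_mem_inf_fixerOutside (isSymm_symmSending ek ek (-ek))
      fun i hi => symmSending_mulVec_single (hk' i hi) (by simp [hk' i hi]) ek)
    (upperTrans_mem_inf_fixerOutside (isSymm_symmSending ek ek (ek - x₀))
      fun i hi => symmSending_mulVec_single (hk' i hi) (by simp [hk' i hi, hx₀ i hi]) ek))
    (lowerTrans_mem_inf_fixerOutside (isSymm_symmSending y₁ x₀ ek)
      fun i hi => symmSending_mulVec_single (hy₁ i hi) (hk' i hi) x₀)
  refine mem_orbit_subgroup_iff.mpr ⟨_, hmem, ?_⟩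
  rw [mul_smul, mul_smul, lowerTrans_smul, zero_add, symmSending_mulVec_self hy₁x₀,
    upperTrans_smul, symmSending_mulVec_self hekek, add_sub_cancel, lowerTrans_smul,
    symmSending_mulVec_self hekek, add_neg_cancel, e]

theorem f_mem_orbit_of_apply_eq_one {t : Finset (Fin g)} {k : Fin g} (hk : k ∈ t)
    {x y : Fin g → ℤ} (hx : ∀ i ∉ t, x i = 0) (hy : ∀ i ∉ t, y i = 0) (hyk : y k = 1) :
    f k ∈ orbit ↥(translations g ⊓ fixerOutside t ⊓ stabilizer (Sp g) (e k)) (Sum.elim x y) := by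
  set ek : Fin g → ℤ := Pi.single k 1
  have hk' : ∀ i ∉ t, ek i = 0 := fun i hi =>
    Pi.single_eq_of_ne (ne_of_mem_of_not_mem hk hi).symm 1
  have hekek : ek ⬝ᵥ ek = 1 := by simp [ek]
  have hek : ∃ x', (∀ i ∉ t, x' i = 0) ∧ Sum.elim x' ek ∈
      orbit ↥(translations g ⊓ fixerOutside t ⊓ stabilizer (Sp g) (e k)) (Sum.elim x y) := by
    by_cases hj : ∃ j ∈ t, j ≠ k
    · obtain ⟨j, hjt, hjk⟩ := hj
      set ej : Fin g → ℤ := Pi.single j 1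
      have hj' : ∀ i ∉ t, ej i = 0 := fun i hi =>
        Pi.single_eq_of_ne (ne_of_mem_of_not_mem hjt hi).symm 1
      have hejej : ej ⬝ᵥ ej = 1 := by simp [ej]
      have heky : ek ⬝ᵥ y = 1 := by simp [ek, hyk]
      -- A lower translation fixing `e_k` changes `y` only through the other coordinates of `x`,
      -- so first move `x` to `e_j`.
      have hU := upperTrans_mem_inf_fixerOutside (isSymm_symmSending ek y (ej - x))
        fun i hi => symmSending_mulVec_single (hk' i hi) (by simp [hj' i hi, hx i hi]) y
      have hL := lowerTrans_mem_inf_fixerOutside (isSymm_symmSending ej ej (ek - y))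
        fun i hi => symmSending_mulVec_single (hj' i hi) (by simp [hk' i hi, hy i hi]) ej
      refine ⟨ej, hj', mem_orbit_subgroup_iff.mpr ⟨_, mul_mem ⟨hL, ?_⟩
        ⟨hU, upperTrans_mem_stabilizer_e _ _ k⟩, ?_⟩⟩
      · exact lowerTrans_mem_stabilizer_e _ (symmSending_mulVec_single
          (Pi.single_eq_of_ne hjk.symm 1) (by simp [ek, hyk]) ej)
      · rw [mul_smul, upperTrans_smul, symmSending_mulVec_self heky, add_sub_cancel,
          lowerTrans_smul, symmSending_mulVec_self hejej, add_sub_cancel]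
    · push Not at hj
      have hyek : y = ek := funext fun i => by
        by_cases hi : i ∈ t
        · rw [hj i hi, hyk]
          simp [ek]
        · rw [hy i hi, hk' i hi]
      exact ⟨x, hx, hyek ▸ mem_orbit_self _⟩
  obtain ⟨x', hx', h⟩ := hek
  refine mem_orbit_trans h (mem_orbit_subgroup_iff.mpr ⟨_, ⟨upperTrans_mem_inf_fixerOutside
    (isSymm_symmSending ek ek (-x')) fun i hi => symmSending_mulVec_single (hk' i hi)
      (by simp [hx' i hi]) ek, upperTrans_mem_stabilizer_e _ _ k⟩, ?_⟩)
  rw [upperTrans_smul, symmSending_mulVec_self hekek, add_neg_cancel, f]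

theorem eq_one_of_mem_fixerOutside_empty {A : Sp g} (hA : A ∈ fixerOutside ∅) : A = 1 := by
  have h : ∀ a, (A : Mat) *ᵥ Pi.single a 1 = Pi.single a 1 := by
    rintro (i | i)
    · simpa [e, smul_def] using (mem_fixerOutside.mp hA i (Finset.notMem_empty i)).1
    · simpa [f, smul_def] using (mem_fixerOutside.mp hA i (Finset.notMem_empty i)).2
  ext1
  ext a b
  simpa [Matrix.one_apply, Pi.single_apply, eq_comm] using congrFun (h b) a

theorem fixerOutside_le_translations (t : Finset (Fin g)) : fixerOutside t ≤ translations g := by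
  induction t using Finset.induction_on with
  | empty => intro A hA; rw [eq_one_of_mem_fixerOutside_empty hA]; exact one_mem _
  | insert k t hk ih =>
    intro A hA
    have hkt := Finset.mem_insert_self k t
    have hsupp : ∀ i ∉ insert k t, (Pi.single k 1 : Fin g → ℤ) i = 0 := fun i hi =>
      Pi.single_eq_of_ne (ne_of_mem_of_not_mem hkt hi).symm 1
    have hzero : ∀ i ∉ insert k t, (0 : Fin g → ℤ) i = 0 := fun _ _ => rfl
    obtain ⟨x, y, hAe, hx, hy⟩ := exists_smul_sum_elim_of_mem_fixerOutside hA hsupp hzero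
    obtain ⟨x', y', hAf, hx', hy'⟩ := exists_smul_sum_elim_of_mem_fixerOutside hA hzero hsupp
    have hω : symplecticForm (Sum.elim x y) (Sum.elim x' y') = 1 := by
      rw [← hAe, ← hAf, symplecticForm_smul, symplecticForm_sum_elim]
      simp
    obtain ⟨E₁, hE₁, hE₁A⟩ :=
      mem_orbit_subgroup_iff.mp (e_mem_orbit_of_symplecticForm_eq_one hkt hx hy hx' hy' hω)
    have hE₁Ae : (E₁ * A) • e k = e k := by rw [mul_smul, show A • e k = _ from hAe, hE₁A]
    obtain ⟨x'', y'', hf, hx'', hy''⟩ :=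
      exists_smul_sum_elim_of_mem_fixerOutside (mul_mem hE₁.2 hA) hzero hsupp
    have hy''k : y'' k = 1 := by
      rw [← symplecticForm_e k x'' y'', ← hf, ← hE₁Ae, symplecticForm_smul, symplecticForm_e]
      simp
    obtain ⟨E₂, hE₂, hE₂f⟩ :=
      mem_orbit_subgroup_iff.mp (f_mem_orbit_of_apply_eq_one hkt hx'' hy'' hy''k)
    obtain ⟨hE₂, hE₂e⟩ := Subgroup.mem_inf.mp hE₂
    obtain ⟨hE₂T, hE₂F⟩ := Subgroup.mem_inf.mp hE₂
    have hfix : E₂ * E₁ * A ∈ fixerOutside t := by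
      refine mem_fixerOutside.mpr fun i hi => ?_
      simp only [mul_assoc, mul_smul E₂ (E₁ * A)]
      rcases eq_or_ne i k with rfl | hik
      · exact ⟨by rw [hE₁Ae]; exact hE₂e, by rw [show (E₁ * A) • f _ = _ from hf, hE₂f]⟩
      have hi' : i ∉ insert k t := by simp [hi, hik]
      simp only [mul_smul, (mem_fixerOutside.mp hA i hi'), (mem_fixerOutside.mp hE₁.2 i hi'),
        (mem_fixerOutside.mp hE₂F i hi'), and_self]
    have := mul_mem (inv_mem (mul_mem hE₂T (Subgroup.mem_inf.mp hE₁).1)) (ih hfix)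
    rwa [inv_mul_cancel_left] at this

theorem translations_eq_top (g : ℕ) : translations g = ⊤ :=
  top_le_iff.mp fun _ _ =>
    fixerOutside_le_translations Finset.univ
      (mem_fixerOutside.mpr fun i hi => absurd (Finset.mem_univ i) hi)

/-! ### Translations are commutators -/

theorem upperTrans_mul (B C : Matrix (Fin g) (Fin g) ℤ) (hB hC) :
    upperTrans B hB * upperTrans C hC = upperTrans (B + C) (hB.add hC) := by
  ext1
  simp [upperTrans, fromBlocks_multiply, add_comm]

theorem upperTrans_zero : upperTrans (0 : Matrix (Fin g) (Fin g) ℤ) isSymm_zero = 1 := by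
  ext1
  simp [upperTrans, fromBlocks_one]

theorem upperTrans_inv (B : Matrix (Fin g) (Fin g) ℤ) (hB : B.IsSymm) :
    (upperTrans B hB)⁻¹ = upperTrans (-B) hB.neg := by
  rw [inv_eq_iff_mul_eq_one, upperTrans_mul]
  ext1
  simp [upperTrans, fromBlocks_one]

theorem blockDiag_mul_upperTrans (U V B : Matrix (Fin g) (Fin g) ℤ) (hUV hB) :
    blockDiag U V hUV * upperTrans B hB =
      upperTrans (U * B * Uᵀ) (hB.mul_mul_transpose U) * blockDiag U V hUV := by
  ext1
  simp [blockDiag, upperTrans, fromBlocks_multiply, Matrix.mul_assoc, hUV]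

theorem jmat_mul_upperTrans (B : Matrix (Fin g) (Fin g) ℤ) (hB) :
    jmat * upperTrans B hB = lowerTrans (-B) hB.neg * jmat := by
  ext1
  simp [jmat, upperTrans, lowerTrans, Jmat, fromBlocks_multiply]

def commutatorUpperTrans (g : ℕ) : AddSubgroup (Matrix (Fin g) (Fin g) ℤ) where
  carrier := {B | ∃ hB : B.IsSymm, upperTrans B hB ∈ commutator (Sp g)}
  zero_mem' := ⟨isSymm_zero, upperTrans_zero ▸ one_mem _⟩
  add_mem' := fun ⟨hB, hB'⟩ ⟨hC, hC'⟩ =>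
    ⟨hB.add hC, upperTrans_mul _ _ hB hC ▸ mul_mem hB' hC'⟩
  neg_mem' := fun ⟨hB, hB'⟩ => ⟨hB.neg, upperTrans_inv _ hB ▸ inv_mem hB'⟩

theorem conj_sub_mem_commutatorUpperTrans {U V B : Matrix (Fin g) (Fin g) ℤ} (hUV : Uᵀ * V = 1)
    (hB : B.IsSymm) : U * B * Uᵀ - B ∈ commutatorUpperTrans g := by
  have h := Subgroup.commutator_mem_commutator (Subgroup.mem_top (blockDiag U V hUV))
    (Subgroup.mem_top (upperTrans B hB))
  rw [commutatorElement_def, blockDiag_mul_upperTrans, mul_inv_cancel_right, upperTrans_inv,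
    upperTrans_mul] at h
  rw [sub_eq_add_neg]
  exact ⟨_, h⟩

theorem single_add_single_mem_commutatorUpperTrans_of_ne {i j l : Fin g} (hij : i ≠ j)
    (hjl : j ≠ l) (c : ℤ) : single i l c + single l i c ∈ commutatorUpperTrans g := by
  have hB : (single j l c + single l j c).IsSymm := by
    simp [IsSymm, transpose_single, add_comm]
  convert conj_sub_mem_commutatorUpperTrans
    (transpose_one_add_single_mul_one_sub_single hij) hB using 1
  simp [transpose_single, add_mul, mul_add, hjl, hjl.symm]
  abel

theorem single_add_single_add_single_mem_commutatorUpperTrans {i j : Fin g} (hij : i ≠ j)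
    (c : ℤ) : single i j c + single j i c + single i i c ∈ commutatorUpperTrans g := by
  convert conj_sub_mem_commutatorUpperTrans (transpose_one_add_single_mul_one_sub_single hij)
    (isSymm_single_self j c) using 1
  simp [transpose_single, add_mul, mul_add]
  abel

theorem single_mem_commutatorUpperTrans (hg : 3 ≤ g) (i : Fin g) (c : ℤ) :
    single i i c ∈ commutatorUpperTrans g := by
  obtain ⟨j, hji, -⟩ := Fin.exists_ne_and_ne_of_two_lt i i (by omega)
  obtain ⟨l, hli, hlj⟩ := Fin.exists_ne_and_ne_of_two_lt i j (by omega)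
  simpa using sub_mem (single_add_single_add_single_mem_commutatorUpperTrans hji.symm c)
    (single_add_single_mem_commutatorUpperTrans_of_ne hli.symm hlj c)

theorem single_add_single_mem_commutatorUpperTrans (hg : 3 ≤ g) (i j : Fin g) (c : ℤ) :
    single i j c + single j i c ∈ commutatorUpperTrans g := by
  rcases eq_or_ne i j with rfl | hij
  · rw [← single_add]
    exact single_mem_commutatorUpperTrans hg i _
  · obtain ⟨l, hli, hlj⟩ := Fin.exists_ne_and_ne_of_two_lt i j (by omega)
    exact single_add_single_mem_commutatorUpperTrans_of_ne hli.symm hlj c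

theorem mem_commutatorUpperTrans (hg : 3 ≤ g) {B : Matrix (Fin g) (Fin g) ℤ} (hB : B.IsSymm) :
    B ∈ commutatorUpperTrans g := by
  have key (M : Matrix (Fin g) (Fin g) ℤ) :
      M + Mᵀ - diagonal (diag M) ∈ commutatorUpperTrans g := by
    induction M using Matrix.induction_on' with
    | h_zero => simp
    | h_add p q hp hq =>
      convert add_mem hp hq using 1
      rw [transpose_add, show diagonal (p + q).diag = diagonal p.diag + diagonal q.diag from
        (diagonal_add _ _).symm]
      abel
    | h_std_basis i j c =>
      rcases eq_or_ne i j with rfl | hij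
      · simpa [transpose_single, ← diagonal_single] using single_mem_commutatorUpperTrans hg i c
      · simpa [transpose_single, hij] using single_add_single_mem_commutatorUpperTrans hg i j c
  -- `B = N + Nᵀ - diagonal (diag N)` for its upper triangle `N`
  convert key (of fun i j => if i ≤ j then B i j else 0) using 1
  ext a b
  rcases lt_trichotomy a b with h | rfl | h
  · simp [h.le, h.ne, not_le.mpr h]
  · simp
  · simp [h.le, h.ne', not_le.mpr h, hB.apply]

theorem upperTrans_mem_commutator (hg : 3 ≤ g) {B : Matrix (Fin g) (Fin g) ℤ} (hB : B.IsSymm) :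
    upperTrans B hB ∈ commutator (Sp g) :=
  (mem_commutatorUpperTrans hg hB).2

theorem lowerTrans_mem_commutator (hg : 3 ≤ g) {C : Matrix (Fin g) (Fin g) ℤ} (hC : C.IsSymm) :
    lowerTrans C hC ∈ commutator (Sp g) := by
  have h := jmat_mul_upperTrans (-C) hC.neg
  simp only [neg_neg] at h
  rw [eq_mul_inv_of_mul_eq h.symm]
  exact Subgroup.Normal.conj_mem inferInstance _ (upperTrans_mem_commutator hg hC.neg) jmat

theorem translations_le_commutator (hg : 3 ≤ g) : translations g ≤ commutator (Sp g) :=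
  Subgroup.closure_le _ |>.mpr <| by
    rintro _ (⟨B, hB, rfl⟩ | ⟨C, hC, rfl⟩)
    exacts [upperTrans_mem_commutator hg hB, lowerTrans_mem_commutator hg hC]

end Sp

/-- For every `g ≥ 3`, the symplectic group `Sp_{2g}(ℤ)` is perfect;
equivalently, its abelianisation is trivial. -/
theorem Sp_perfect (g : ℕ) (hg : 3 ≤ g) :
    commutator ↥(Sp g) = ⊤ ∧ Subsingleton (Abelianization ↥(Sp g)) := by
  have h : commutator (Sp g) = ⊤ :=
    top_le_iff.mp (Sp.translations_eq_top g ▸ Sp.translations_le_commutator hg)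
  refine ⟨h, ?_⟩
  change Subsingleton (_ ⧸ commutator (Sp g))
  rw [h]
  exact QuotientGroup.subsingleton_quotient_top
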